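/- For the ECA rule 8, with local rule h(a,b,c) = ¬a ∧ b ∧ c, and for every n ≥ 3: if two block-sequential update schedules τ and τ' satisfy lab_τ((i,i−1)) ≠ lab_τ'((i,i−1)) for some cell i ∈ ℤ/nℤ, then there exists a configuration x with f^{(τ)}(x) ≠ f^{(τ')}(x), i.e. the two dynamics differ. -/

import Mathlib

/-- One round of a block-sequential update: all cells of rank `k` are updated
simultaneously by the ECA local rule `h`, reading the current states. -/
def ecaStep (n : ℕ) (h : Bool → Bool → Bool → Bool) (τ : ZMod n → ℕ) (k : ℕ)
    (x : ZMod n → Bool) : ZMod n → Bool :=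
  fun i => if τ i = k then h (x (i - 1)) (x i) (x (i + 1)) else x i

/-- State after processing ranks `0, 1, …, k` in increasing order. -/
def ecaUpTo (n : ℕ) (h : Bool → Bool → Bool → Bool) (τ : ZMod n → ℕ) :
    ℕ → (ZMod n → Bool) → ZMod n → Bool
  | 0 => ecaStep n h τ 0
  | k + 1 => fun x => ecaStep n h τ (k + 1) (ecaUpTo n h τ k x)

/-- Asynchronous global function `f^{(τ)}` for the block-sequential update
schedule `τ : ZMod n → ℕ` (rank of each cell): a cell keeps the value it gets
in the round where it is updated (it is never updated again afterwards). -/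
def ecaAsync (n : ℕ) (h : Bool → Bool → Bool → Bool) (τ : ZMod n → ℕ)
    (x : ZMod n → Bool) : ZMod n → Bool :=
  fun i => ecaUpTo n h τ (τ i) x i

/-- Synchronous global function of the ECA with local rule `h`. -/
def ecaSync (n : ℕ) (h : Bool → Bool → Bool → Bool) (x : ZMod n → Bool) :
    ZMod n → Bool :=
  fun i => h (x (i - 1)) (x i) (x (i + 1))

/-- Label of the arc `(i, j)` for schedule `τ`:
`true` = ⊕ (τ i ≥ τ j), `false` = ⊖ (τ i < τ j). -/
def lab (n : ℕ) (τ : ZMod n → ℕ) (i j : ZMod n) : Bool :=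
  decide (τ j ≤ τ i)

/-!
Under a block-sequential schedule a cell is updated once, reading the final values of its
neighbours of strictly smaller rank and the initial values of the others; for rule 8 a cell in
state 0 therefore stays 0. Start from the configuration that is 1 exactly on cells `i - 1` and
`i` (for `n ≥ 3`, cells `i - 2` and `i + 1` are neither). Cell `i` ends in state 0 because its
right neighbour is 0, and cell `i - 1` sees 0 on its left and 1 in itself, so it ends in the
state it reads in cell `i`: 0 if `τ i < τ (i - 1)` and 1 otherwise. Hence
`f^{(τ)}(x)_{i-1} = lab_τ(i, i - 1)`.
-/

section BlockSequential

variable {n : ℕ} (h : Bool → Bool → Bool → Bool) (τ : ZMod n → ℕ) (x : ZMod n → Bool)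

theorem ecaUpTo_apply (k : ℕ) (j : ZMod n) :
    ecaUpTo n h τ k x j = if τ j ≤ k then ecaAsync n h τ x j else x j := by
  induction k with
  | zero =>
    by_cases hj : τ j = 0
    · simp [hj, ecaAsync, ecaUpTo]
    · simp [hj, ecaUpTo, ecaStep]
  | succ k ih =>
    by_cases hj : τ j = k + 1
    · simp [hj, ecaAsync]
    · simp only [ecaUpTo, ecaStep, if_neg hj, ih]
      exact if_congr (by omega) rfl rfl

theorem ecaAsync_apply (j : ZMod n) :
    ecaAsync n h τ x j =
      h (if τ (j - 1) < τ j then ecaAsync n h τ x (j - 1) else x (j - 1)) (x j)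
        (if τ (j + 1) < τ j then ecaAsync n h τ x (j + 1) else x (j + 1)) := by
  show ecaUpTo n h τ (τ j) x j = _
  rcases hj : τ j with _ | k
  · simp [ecaUpTo, ecaStep, hj]
  · show ecaStep n h τ (k + 1) (ecaUpTo n h τ k x) j = _
    rw [ecaStep, if_pos hj, ecaUpTo_apply, ecaUpTo_apply h τ x k j, ecaUpTo_apply,
      if_neg (show ¬τ j ≤ k by omega)]
    simp only [Nat.lt_succ_iff]

theorem ecaAsync_eq_false_of_eq_false (hh : ∀ a c, h a false c = false) {j : ZMod n}
    (hx : x j = false) : ecaAsync n h τ x j = false := by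
  rw [ecaAsync_apply, hx, hh]

end BlockSequential

theorem rule8_ecaAsync_sub_one {n : ℕ} (τ : ZMod n → ℕ) (x : ZMod n → Bool) (i : ZMod n)
    (hx₁ : x (i - 1 - 1) = false) (hx₂ : x (i - 1) = true) (hx₃ : x i = true)
    (hx₄ : x (i + 1) = false) :
    ecaAsync n (fun a b c => !a && b && c) τ x (i - 1) = lab n τ i (i - 1) := by
  have hzero : ∀ {j}, x j = false → ecaAsync n (fun a b c => !a && b && c) τ x j = false :=
    ecaAsync_eq_false_of_eq_false _ τ x (by simp)
  have hi : ecaAsync n (fun a b c => !a && b && c) τ x i = false := by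
    rw [ecaAsync_apply, hzero hx₄, hx₄, ite_self]
    simp
  rw [ecaAsync_apply, sub_add_cancel, hx₁, hzero hx₁, hx₂, hx₃, hi, lab]
  simp [← decide_not]

theorem ZMod.natCast_ne_zero_of_lt {k n : ℕ} (hk₀ : 0 < k) (hk : k < n) : (k : ZMod n) ≠ 0 := by
  rw [Ne, ZMod.natCast_eq_zero_iff]
  exact fun hdvd => absurd (Nat.le_of_dvd hk₀ hdvd) (by omega)

/-- Rule 8 (h a b c = ¬a ∧ b ∧ c): if two schedules differ on the label of
some arc $(i,i-1)$ then their dynamics differ. -/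
theorem rule_8_counterclockwise_diff (n : ℕ) (hn : 3 ≤ n) (τ τ' : ZMod n → ℕ)
    (i : ZMod n) (hdiff : lab n τ i (i - 1) ≠ lab n τ' i (i - 1)) :
    ∃ x : ZMod n → Bool,
      ecaAsync n (fun a b c => !a && b && c) τ x ≠
        ecaAsync n (fun a b c => !a && b && c) τ' x := by
  have h₁ : ((1 : ℕ) : ZMod n) ≠ 0 := ZMod.natCast_ne_zero_of_lt one_pos (by omega)
  have h₂ : ((2 : ℕ) : ZMod n) ≠ 0 := ZMod.natCast_ne_zero_of_lt two_pos (by omega)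
  push_cast at h₁ h₂
  set x : ZMod n → Bool := fun j => decide (j = i - 1 ∨ j = i)
  have hx₁ : x (i - 1 - 1) = false := by
    simp only [x, decide_eq_false_iff_not, not_or]
    exact ⟨fun h => h₁ (by linear_combination -h), fun h => h₂ (by linear_combination -h)⟩
  have hx₄ : x (i + 1) = false := by
    simp only [x, decide_eq_false_iff_not, not_or]
    exact ⟨fun h => h₂ (by linear_combination h), fun h => h₁ (by linear_combination h)⟩
  refine ⟨x, fun heq => hdiff ?_⟩
  rw [← rule8_ecaAsync_sub_one τ x i hx₁ (by simp [x]) (by simp [x]) hx₄,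
    ← rule8_ecaAsync_sub_one τ' x i hx₁ (by simp [x]) (by simp [x]) hx₄, heq]
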